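/- arXiv:2102.13411 — 2 statements merged into one kernel-verified Lean document; each statement's English description precedes it below -/
import Mathlib

section
/- Let q be a positive integer, l_θ > 0 and l_s > √q·l_θ. Then there exists a constant r3 > 0 such that r3·(θ′ − θ)ᵀ·dzv(θ′) ≥ |θ′ − θ|² for all θ′ ∈ ℝ^q with |θ′| ≥ l_s and all θ ∈ ℝ^q with |θ| ≤ l_θ. -/
/-! The dead zone vanishes on `[-lθ, lθ]` and has the sign of its argument outside, so every
summand `(θ'ⱼ - θⱼ) dz(θ'ⱼ)` of the inner product is nonnegative when `‖θ‖ ≤ lθ`. The largest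
component of `θ'` satisfies `‖θ'‖ ≤ √q |θ'ᵢ|`, hence `|θ'ᵢ| ≥ ls / √q > lθ`; a fixed distance
`δ` beyond the dead zone, the summand at `i` dominates `δ³ θ'ᵢ² / (lθ + 1) ≥ δ³ ‖θ'‖² / (q (lθ + 1))`,
while `‖θ' - θ‖ ≤ 2 ‖θ'‖` because `‖θ‖ ≤ lθ ≤ ls ≤ ‖θ'‖`. -/

open Real Set Filter
open scoped RealInnerProductSpace

noncomputable section

/-- A continuous function `ρ : [0,∞) → [0,∞)` is of class K if it is strictly
increasing with `ρ 0 = 0`. -/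
def IsClassK (ρ : ℝ → ℝ) : Prop :=
  ContinuousOn ρ (Set.Ici 0) ∧ StrictMonoOn ρ (Set.Ici 0) ∧ ρ 0 = 0

/-- Class K-infinity: class K and unbounded. -/
def IsClassKInfty (ρ : ℝ → ℝ) : Prop :=
  IsClassK ρ ∧ Filter.Tendsto ρ Filter.atTop Filter.atTop

/-- Class KL functions. -/
def IsClassKL (β : ℝ → ℝ → ℝ) : Prop :=
  (∀ t ∈ Set.Ici (0:ℝ), IsClassK fun s => β s t) ∧
  ∀ s ∈ Set.Ici (0:ℝ), AntitoneOn (β s) (Set.Ici 0) ∧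
      Filter.Tendsto (β s) Filter.atTop (nhds 0)

/-- The smooth saturation function with level `ls` and margin `εs`. -/
noncomputable def sat (ls εs s : ℝ) : ℝ :=
  if |s| ≤ ls then s
  else if |s| ≤ ls + εs then s - Real.sign s * (|s| - ls) ^ 2 / (2 * εs)
  else (ls + εs / 2) * Real.sign s

/-- Componentwise saturation on `ℝ^q`. -/
noncomputable def satv {q : ℕ} (ls εs : ℝ) (θ : EuclideanSpace ℝ (Fin q)) :
    EuclideanSpace ℝ (Fin q) := WithLp.toLp 2 (fun i => sat ls εs (θ i))

/-- The dead-zone function with level `lθ`. -/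
noncomputable def dz (lθ s : ℝ) : ℝ :=
  if |s| ≤ lθ then 0
  else if |s| < lθ + 1 then
    (|s| - lθ) ^ 2 * (2 * (lθ + 1) ^ 2 - (2 * lθ + 1) * |s|) * Real.sign s
  else s

/-- Componentwise dead-zone on `ℝ^q`. -/
noncomputable def dzv {q : ℕ} (lθ : ℝ) (θ : EuclideanSpace ℝ (Fin q)) :
    EuclideanSpace ℝ (Fin q) := WithLp.toLp 2 (fun i => dz lθ (θ i))

section DeadZone

variable {lθ δ s t : ℝ}

lemma dz_neg (lθ s : ℝ) : dz lθ (-s) = -dz lθ s := by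
  simp only [dz, abs_neg, Real.sign_neg]
  split_ifs <;> ring

lemma dz_of_abs_le (h : |s| ≤ lθ) : dz lθ s = 0 := if_pos h

lemma dz_of_add_one_le_abs (h : lθ + 1 ≤ |s|) : dz lθ s = s := by
  rw [dz, if_neg (by linarith), if_neg (by linarith)]

lemma mul_sq_le_dz (hlθ : 0 ≤ lθ) (h : lθ < s) (h1 : s < lθ + 1) :
    (lθ + 1) * (s - lθ) ^ 2 ≤ dz lθ s := by
  have hs : 0 < s := hlθ.trans_lt h
  rw [dz, abs_of_pos hs, Real.sign_of_pos hs, if_neg h.not_ge, if_pos h1]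
  -- `2 (lθ + 1)² - (2 lθ + 1) s - (lθ + 1) = (2 lθ + 1) (lθ + 1 - s)`
  nlinarith [mul_nonneg (sq_nonneg (s - lθ))
    (mul_nonneg (by linarith : (0 : ℝ) ≤ 2 * lθ + 1) (by linarith : (0 : ℝ) ≤ lθ + 1 - s))]

lemma dz_nonneg (hlθ : 0 ≤ lθ) (hs : 0 ≤ s) : 0 ≤ dz lθ s := by
  rcases le_or_gt s lθ with h | h
  · rw [dz_of_abs_le (by rwa [abs_of_nonneg hs])]
  rcases lt_or_ge s (lθ + 1) with h1 | h1
  · exact (by positivity : (0 : ℝ) ≤ _).trans (mul_sq_le_dz hlθ h h1)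
  · rwa [dz_of_add_one_le_abs (by rwa [abs_of_nonneg hs])]

lemma neg_sub_neg_mul_dz_neg : (-s - -t) * dz lθ (-s) = (s - t) * dz lθ s := by
  rw [dz_neg]; ring

lemma sub_mul_dz_nonneg_of_nonneg (hlθ : 0 ≤ lθ) (ht : |t| ≤ lθ) (hs : 0 ≤ s) :
    0 ≤ (s - t) * dz lθ s := by
  rcases le_or_gt t s with hts | hts
  · exact mul_nonneg (sub_nonneg.2 hts) (dz_nonneg hlθ hs)
  · rw [dz_of_abs_le (by rw [abs_of_nonneg hs]; linarith [le_abs_self t]), mul_zero]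

lemma sub_mul_dz_nonneg (hlθ : 0 ≤ lθ) (ht : |t| ≤ lθ) (s : ℝ) : 0 ≤ (s - t) * dz lθ s := by
  rcases le_total 0 s with hs | hs
  · exact sub_mul_dz_nonneg_of_nonneg hlθ ht hs
  · rw [← neg_sub_neg_mul_dz_neg]
    exact sub_mul_dz_nonneg_of_nonneg hlθ (by rwa [abs_neg]) (neg_nonneg.2 hs)

lemma pow_three_mul_sq_le_sub_mul_dz_of_nonneg (hlθ : 0 ≤ lθ) (hδ : 0 < δ) (hδ1 : δ ≤ 1)
    (ht : |t| ≤ lθ) (hs : lθ + δ ≤ s) :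
    δ ^ 3 * s ^ 2 ≤ (lθ + 1) * ((s - t) * dz lθ s) := by
  have hts : δ ≤ s - t := by linarith [le_abs_self t]
  rcases lt_or_ge s (lθ + 1) with h1 | h1
  · have hdz : (lθ + 1) * δ ^ 2 ≤ dz lθ s := by
      refine le_trans ?_ (mul_sq_le_dz hlθ (by linarith) h1)
      gcongr
      linarith
    calc δ ^ 3 * s ^ 2 ≤ δ ^ 3 * (lθ + 1) ^ 2 := by gcongr; linarith
      _ = (lθ + 1) * (δ * ((lθ + 1) * δ ^ 2)) := by ring
      _ ≤ (lθ + 1) * ((s - t) * dz lθ s) :=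
        mul_le_mul_of_nonneg_left (mul_le_mul hts hdz (by positivity) (by linarith)) (by linarith)
  · rw [dz_of_add_one_le_abs (by rwa [abs_of_nonneg (by linarith)])]
    have hs' : s ≤ (lθ + 1) * (s - t) := by
      nlinarith [mul_nonneg hlθ (by linarith : (0 : ℝ) ≤ s - lθ - 1), le_abs_self t]
    calc δ ^ 3 * s ^ 2 ≤ 1 * s ^ 2 := by gcongr; exact pow_le_one₀ hδ.le hδ1
      _ = s * s := by ring
      _ ≤ (lθ + 1) * (s - t) * s := by gcongr; linarith
      _ = (lθ + 1) * ((s - t) * s) := by ring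

lemma pow_three_mul_sq_le_sub_mul_dz (hlθ : 0 ≤ lθ) (hδ : 0 < δ) (hδ1 : δ ≤ 1)
    (ht : |t| ≤ lθ) (hs : lθ + δ ≤ |s|) :
    δ ^ 3 * s ^ 2 ≤ (lθ + 1) * ((s - t) * dz lθ s) := by
  rcases le_total 0 s with hs0 | hs0
  · exact pow_three_mul_sq_le_sub_mul_dz_of_nonneg hlθ hδ hδ1 ht (by rwa [abs_of_nonneg hs0] at hs)
  · rw [← neg_sub_neg_mul_dz_neg, ← neg_sq]
    exact pow_three_mul_sq_le_sub_mul_dz_of_nonneg hlθ hδ hδ1 (by rwa [abs_neg])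
      (by rwa [abs_of_nonpos hs0] at hs)

end DeadZone

lemma EuclideanSpace.exists_norm_sq_le_card_mul_sq {ι : Type*} [Fintype ι] [Nonempty ι]
    (x : EuclideanSpace ℝ ι) : ∃ i, ‖x‖ ^ 2 ≤ Fintype.card ι * x i ^ 2 := by
  obtain ⟨i, -, hi⟩ := Finset.exists_max_image Finset.univ (fun j => x j ^ 2) Finset.univ_nonempty
  refine ⟨i, ?_⟩
  rw [EuclideanSpace.real_norm_sq_eq, ← nsmul_eq_mul]
  exact Finset.sum_le_card_nsmul _ _ _ fun j _ => hi j (Finset.mem_univ j)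

lemma inner_sub_dzv {q : ℕ} (lθ : ℝ) (θ' θ : EuclideanSpace ℝ (Fin q)) :
    ⟪θ' - θ, dzv lθ θ'⟫ = ∑ j, (θ' j - θ j) * dz lθ (θ' j) := by
  simp [PiLp.inner_apply, dzv, mul_comm]

lemma sub_mul_dz_le_inner_dzv {q : ℕ} {lθ : ℝ} (hlθ : 0 ≤ lθ) {θ' θ : EuclideanSpace ℝ (Fin q)}
    (hθ : ‖θ‖ ≤ lθ) (i : Fin q) : (θ' i - θ i) * dz lθ (θ' i) ≤ ⟪θ' - θ, dzv lθ θ'⟫ := by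
  rw [inner_sub_dzv]
  exact Finset.single_le_sum (f := fun j => (θ' j - θ j) * dz lθ (θ' j))
    (fun j _ => sub_mul_dz_nonneg hlθ ((PiLp.norm_apply_le θ j).trans hθ) _) (Finset.mem_univ i)

/-- linear lower bound of the dead-zone outside the ball of radius `l_s`. -/
theorem statement4 (q : ℕ) (hq : 0 < q) (lθ ls : ℝ) (hlθ : 0 < lθ)
    (hls : Real.sqrt q * lθ < ls) :
    ∃ r3 : ℝ, 0 < r3 ∧
      ∀ (θ' θ : EuclideanSpace ℝ (Fin q)), ls ≤ ‖θ'‖ → ‖θ‖ ≤ lθ →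
        ‖θ' - θ‖ ^ 2 ≤ r3 * ⟪θ' - θ, dzv lθ θ'⟫ := by
  have hsqrt : 1 ≤ √(q : ℝ) := Real.one_le_sqrt.2 (Nat.one_le_cast.2 hq)
  set δ := min (ls / √(q : ℝ) - lθ) 1
  have hδ : 0 < δ := lt_min (by rw [sub_pos, lt_div_iff₀ (by positivity)]; linarith) one_pos
  refine ⟨4 * q * (lθ + 1) / δ ^ 3, by positivity, fun θ' θ hθ' hθ => ?_⟩
  have : Nonempty (Fin q) := ⟨⟨0, hq⟩⟩
  obtain ⟨i, hi⟩ := EuclideanSpace.exists_norm_sq_le_card_mul_sq θ'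
  rw [Fintype.card_fin] at hi
  have hθ'i : lθ + δ ≤ |θ' i| := by
    have : ls ≤ √(q : ℝ) * |θ' i| := by
      refine hθ'.trans ((pow_le_pow_iff_left₀ (norm_nonneg _) (by positivity) two_ne_zero).1 ?_)
      rwa [mul_pow, Real.sq_sqrt (Nat.cast_nonneg q), sq_abs]
    linarith [min_le_left (ls / √(q : ℝ) - lθ) 1, (div_le_iff₀' (by positivity)).2 this]
  have hdist : ‖θ' - θ‖ ^ 2 ≤ 4 * ‖θ'‖ ^ 2 := by
    have hθθ' : ‖θ‖ ≤ ‖θ'‖ := by nlinarith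
    have : ‖θ' - θ‖ ≤ 2 * ‖θ'‖ := by linarith [norm_sub_le θ' θ]
    nlinarith [norm_nonneg (θ' - θ)]
  have hcomp := (pow_three_mul_sq_le_sub_mul_dz hlθ.le hδ (min_le_right _ _)
    ((PiLp.norm_apply_le θ i).trans hθ) hθ'i).trans
    (mul_le_mul_of_nonneg_left (sub_mul_dz_le_inner_dzv hlθ.le hθ i) (by positivity))
  calc ‖θ' - θ‖ ^ 2 ≤ 4 * (q * θ' i ^ 2) := hdist.trans (by gcongr)
    _ = 4 * q * (lθ + 1) / δ ^ 3 * (δ ^ 3 * θ' i ^ 2 / (lθ + 1)) := by field_simp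
    _ ≤ 4 * q * (lθ + 1) / δ ^ 3 * ⟪θ' - θ, dzv lθ θ'⟫ := by
      gcongr
      rwa [div_le_iff₀' (by positivity)]
end
end

section
/- Under Assumption 3 and with φ and ς continuous, there exists k_dz* > 0 such that for every k_dz ≥ k_dz*, every θ ∈ Θ, every θ̃ ∈ ℝ^q and every x_r ∈ ℝⁿ with |x_r| ≤ r1, the function H(θ, θ̃, x_r) := −ς(x_r)·[φ(satv(θ + θ̃), x_r) − φ(satv(θ), x_r)] − k_dz·dzv(θ̃ + θ) satisfies θ̃ᵀ·H(θ, θ̃, x_r) ≤ −θ̃ᵀ·M1(x_r)·θ̃ ≤ 0. -/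
open Real Set Filter
open scoped RealInnerProductSpace

noncomputable section

/-! Where `‖θ + θ̃‖ ≤ l_s` both saturations act as the identity, so the claim is Assumption 3 for
`θ' = θ + θ̃`, the dead-zone term having the favourable sign. Elsewhere `‖θ̃‖ ≥ l_s - l_θ`, and as
`sat` is bounded the `ς`-term grows at most linearly in `‖θ̃‖`: the left-hand side is at most
`A ‖θ̃‖²`. The dead-zone term `⟪θ̃, dzv (θ̃ + θ)⟫` is a sum of nonnegative terms; it is at least
`d³`, because `l_s > √q l_θ` forces some coordinate of `θ̃ + θ` to exceed `l_θ + d`, and at least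
`‖θ̃‖ (‖θ̃‖ - R)`, because `dz` stays within `l_θ + 1` of the identity. Together these dominate
`A ‖θ̃‖² / k_dz` once `k_dz` is large. Nonnegativity of `M1` follows from Assumption 3 by
homogeneity. -/

theorem dz_neg_s5 (l b : ℝ) : dz l (-b) = -dz l b := by
  unfold dz
  simp only [abs_neg, Real.sign_neg]
  split_ifs <;> ring

theorem dz_of_abs_le_s5 {l b : ℝ} (hb : |b| ≤ l) : dz l b = 0 := if_pos hb

theorem dz_of_le_abs {l b : ℝ} (hb : l + 1 ≤ |b|) : dz l b = b := by
  unfold dz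
  rw [if_neg (by linarith), if_neg (by linarith)]

theorem dz_of_pos {l b : ℝ} (hb : 0 < b) (hlb : l < b) (hbl : b < l + 1) :
    dz l b = (b - l) ^ 2 * (2 * (l + 1) ^ 2 - (2 * l + 1) * b) := by
  unfold dz
  rw [abs_of_pos hb, if_neg hlb.not_ge, if_pos hbl, Real.sign_of_pos hb, mul_one]

theorem dz_nonneg_s5 {l b : ℝ} (hl : 0 ≤ l) (hb : 0 ≤ b) : 0 ≤ dz l b := by
  rcases le_or_gt b l with hbl | hlb
  · rw [dz_of_abs_le_s5 (by rwa [abs_of_nonneg hb])]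
  rcases lt_or_ge b (l + 1) with hb1 | hb1
  · rw [dz_of_pos (by linarith) hlb hb1]
    exact mul_nonneg (sq_nonneg _) (by nlinarith)
  · rw [dz_of_le_abs (by rwa [abs_of_nonneg hb])]; exact hb

theorem sub_mul_abs_dz_le {l a b : ℝ} (hl : 0 ≤ l) (ha : |a| ≤ l) :
    (|b| - l) * |dz l b| ≤ (b - a) * dz l b := by
  wlog hb : 0 ≤ b generalizing a b with H
  · have := H (a := -a) (b := -b) (by rwa [abs_neg]) (by linarith)
    rw [dz_neg_s5, abs_neg, abs_neg] at this
    linarith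
  rw [abs_of_nonneg hb, abs_of_nonneg (dz_nonneg_s5 hl hb)]
  exact mul_le_mul_of_nonneg_right (by linarith [(abs_le.mp ha).2]) (dz_nonneg_s5 hl hb)

theorem mul_dz_nonneg {l a b : ℝ} (hl : 0 ≤ l) (ha : |a| ≤ l) : 0 ≤ (b - a) * dz l b := by
  rcases le_or_gt |b| l with hb | hb
  · rw [dz_of_abs_le_s5 hb, mul_zero]
  · exact (mul_nonneg (by linarith) (abs_nonneg _)).trans (sub_mul_abs_dz_le hl ha)

theorem abs_sub_dz_le {l b : ℝ} (hl : 0 ≤ l) : |b - dz l b| ≤ l + 1 := by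
  wlog hb : 0 ≤ b generalizing b with H
  · have := H (b := -b) (by linarith)
    rwa [dz_neg_s5, ← neg_add', abs_neg, ← sub_eq_add_neg] at this
  rcases le_or_gt b l with hbl | hlb
  · rw [dz_of_abs_le_s5 (by rwa [abs_of_nonneg hb]), sub_zero, abs_of_nonneg hb]; linarith
  rcases lt_or_ge b (l + 1) with hb1 | hb1
  · rw [dz_of_pos (by linarith) hlb hb1, abs_le]
    -- `b - dz l b = (1 - t)² (l (1 + 2t) + t)` with `t = b - l ∈ (0, 1)`
    have hle : 0 ≤ b - (b - l) ^ 2 * (2 * (l + 1) ^ 2 - (2 * l + 1) * b) := by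
      have := mul_nonneg (sq_nonneg (1 - (b - l)))
        (by nlinarith : 0 ≤ l * (1 + 2 * (b - l)) + (b - l))
      nlinarith
    have hge : 0 ≤ (b - l) ^ 2 * (2 * (l + 1) ^ 2 - (2 * l + 1) * b) :=
      mul_nonneg (sq_nonneg _) (by nlinarith)
    constructor <;> linarith
  · rw [dz_of_le_abs (by rwa [abs_of_nonneg hb]), sub_self, abs_zero]; linarith

theorem sq_le_abs_dz {l b d : ℝ} (hl : 0 ≤ l) (hd0 : 0 < d) (hd1 : d ≤ 1) (hb : l + d ≤ |b|) :
    d ^ 2 ≤ |dz l b| := by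
  wlog hb0 : 0 ≤ b generalizing b with H
  · simpa [dz_neg_s5] using H (b := -b) (by rwa [abs_neg]) (by linarith)
  rw [abs_of_nonneg hb0] at hb
  rcases lt_or_ge b (l + 1) with hb1 | hb1
  · rw [dz_of_pos (by linarith) (by linarith) hb1,
      abs_of_nonneg (mul_nonneg (sq_nonneg _) (by nlinarith))]
    have hsq : d ^ 2 ≤ (b - l) ^ 2 := pow_le_pow_left₀ hd0.le (by linarith) 2
    have hfactor : 1 ≤ 2 * (l + 1) ^ 2 - (2 * l + 1) * b := by nlinarith
    nlinarith [sq_nonneg (b - l)]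
  · rw [dz_of_le_abs (by rwa [abs_of_nonneg hb0]), abs_of_nonneg hb0]
    nlinarith

theorem sat_neg (ls εs s : ℝ) : sat ls εs (-s) = -sat ls εs s := by
  unfold sat
  simp only [abs_neg, Real.sign_neg]
  split_ifs <;> ring

theorem sat_of_abs_le {ls εs s : ℝ} (h : |s| ≤ ls) : sat ls εs s = s := if_pos h

theorem abs_sat_le {ls : ℝ} (εs : ℝ) (hls : 0 ≤ ls) (s : ℝ) : |sat ls εs s| ≤ ls + |εs| := by
  wlog hs : 0 ≤ s generalizing s with H
  · simpa [sat_neg] using H (-s) (by linarith)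
  unfold sat
  rw [abs_of_nonneg hs]
  split_ifs with h₁ h₂
  · rw [abs_of_nonneg hs]; linarith [abs_nonneg εs]
  · have hεs : 0 < εs := by linarith
    have hs0 : 0 < s := by linarith
    rw [Real.sign_of_pos hs0, one_mul]
    have hcorr : (s - ls) ^ 2 / (2 * εs) ≤ (s - ls) / 2 := by
      rw [div_le_iff₀ (by positivity)]; nlinarith
    have hcorr0 : 0 ≤ (s - ls) ^ 2 / (2 * εs) := by positivity
    rw [abs_le]; constructor <;> linarith [le_abs_self εs]
  · rw [Real.sign_of_pos (by linarith), mul_one, abs_le]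
    constructor <;> linarith [le_abs_self εs, neg_abs_le εs]

theorem lt_of_sqrt_mul_lt {q : ℕ} (hq : 0 < q) {l ls : ℝ} (hl : 0 ≤ l) (h : √q * l < ls) :
    l < ls := by
  nlinarith [Real.one_le_sqrt.2 (Nat.one_le_cast.2 hq)]

theorem IsCompact.exists_nonneg_bound_of_continuousOn {α F : Type*} [TopologicalSpace α]
    [SeminormedAddCommGroup F] {s : Set α} (hs : IsCompact s) {f : α → F}
    (hf : ContinuousOn f s) : ∃ C, 0 ≤ C ∧ ∀ x ∈ s, ‖f x‖ ≤ C := by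
  obtain ⟨C, hC⟩ := hs.exists_bound_of_continuousOn hf
  exact ⟨max C 0, le_max_right _ _, fun x hx => (hC x hx).trans (le_max_left _ _)⟩

theorem norm_le_sqrt_card_mul_of_abs_le {ι : Type*} [Fintype ι] {v : EuclideanSpace ℝ ι} {c : ℝ}
    (hc : 0 ≤ c) (h : ∀ i, |v i| ≤ c) : ‖v‖ ≤ √(Fintype.card ι) * c := by
  rw [EuclideanSpace.norm_eq, ← Real.sqrt_sq hc, ← Real.sqrt_mul (Nat.cast_nonneg _)]
  apply Real.sqrt_le_sqrt
  calc ∑ i, ‖v i‖ ^ 2 ≤ ∑ _i : ι, c ^ 2 := by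
        gcongr with i
        rw [Real.norm_eq_abs]; exact h i
    _ = Fintype.card ι * c ^ 2 := by simp

theorem exists_norm_le_sqrt_card_mul_abs {ι : Type*} [Fintype ι] [Nonempty ι]
    (v : EuclideanSpace ℝ ι) : ∃ i, ‖v‖ ≤ √(Fintype.card ι) * |v i| := by
  obtain ⟨i, hi⟩ := Finite.exists_max fun j => |v j|
  exact ⟨i, norm_le_sqrt_card_mul_of_abs_le (abs_nonneg _) hi⟩

theorem inner_map_self_nonneg_of_norm_le {E : Type*} [NormedAddCommGroup E]
    [InnerProductSpace ℝ E] (f : E →L[ℝ] E) {r : ℝ} (hr : 0 < r)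
    (h : ∀ v, ‖v‖ ≤ r → 0 ≤ ⟪v, f v⟫) (v : E) : 0 ≤ ⟪v, f v⟫ := by
  rcases eq_or_ne v 0 with rfl | hv
  · simp
  have hv' : 0 < ‖v‖ := norm_pos_iff.2 hv
  have hscaled := h ((r / ‖v‖) • v) (by rw [norm_smul, Real.norm_of_nonneg (by positivity),
    div_mul_cancel₀ _ hv'.ne'])
  rw [map_smul, real_inner_smul_left, real_inner_smul_right, ← mul_assoc] at hscaled
  exact nonneg_of_mul_nonneg_right hscaled (by positivity)

theorem inner_map_sub_inner_le {E : Type*} [NormedAddCommGroup E] [InnerProductSpace ℝ E]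
    (f : E →L[ℝ] E) {u p : E} {a b δ : ℝ} (hf : ‖f‖ ≤ a) (hp : ‖p‖ ≤ b) (hb : 0 ≤ b)
    (hδ : 0 < δ) (hu : δ ≤ ‖u‖) : ⟪u, f u⟫ - ⟪u, p⟫ ≤ (a + b / δ) * ‖u‖ ^ 2 := by
  have hfu : ⟪u, f u⟫ ≤ a * ‖u‖ ^ 2 :=
    calc ⟪u, f u⟫ ≤ ‖u‖ * (‖f‖ * ‖u‖) :=
          (real_inner_le_norm _ _).trans (by gcongr; exact f.le_opNorm u)
      _ ≤ a * ‖u‖ ^ 2 := by nlinarith [norm_nonneg u, sq_nonneg ‖u‖]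
  have hpu : -⟪u, p⟫ ≤ b / δ * ‖u‖ ^ 2 :=
    calc -⟪u, p⟫ ≤ ‖u‖ * b := (neg_le_abs _).trans ((abs_real_inner_le_norm _ _).trans (by gcongr))
      _ ≤ b / δ * ‖u‖ ^ 2 := by
          rw [div_mul_eq_mul_div, le_div_iff₀ hδ]
          nlinarith [mul_le_mul_of_nonneg_left hu (mul_nonneg (norm_nonneg u) hb)]
  linarith

theorem mul_sq_le_mul_of_lower_bounds {A R m x S k : ℝ} (hA : 0 ≤ A) (hm : 0 < m) (hx : 0 ≤ x)
    (hmS : m ≤ S) (hxS : x * (x - R) ≤ S) (hk : 2 * A + A * (2 * R) ^ 2 / m ≤ k) :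
    A * x ^ 2 ≤ k * S := by
  have hS : 0 ≤ S := hm.le.trans hmS
  have hk₀ : 0 ≤ A * (2 * R) ^ 2 / m := by positivity
  rcases le_or_gt (2 * R) x with hxR | hxR
  · have hx2 : x ^ 2 ≤ 2 * S := by nlinarith
    calc A * x ^ 2 ≤ 2 * A * S := by nlinarith [mul_le_mul_of_nonneg_left hx2 hA]
      _ ≤ k * S := mul_le_mul_of_nonneg_right (by linarith) hS
  · calc A * x ^ 2 ≤ A * (2 * R) ^ 2 / m * m := by
          rw [div_mul_cancel₀ _ hm.ne']; gcongr
      _ ≤ k * S := mul_le_mul (by linarith) hmS hm.le (by linarith)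

section Saturation

variable {q : ℕ} {ls εs : ℝ}

theorem norm_satv_le (hls : 0 ≤ ls) (θ : EuclideanSpace ℝ (Fin q)) :
    ‖satv ls εs θ‖ ≤ √q * (ls + |εs|) := by
  simpa using norm_le_sqrt_card_mul_of_abs_le (by positivity) fun i => abs_sat_le εs hls (θ i)

theorem satv_of_norm_le {θ : EuclideanSpace ℝ (Fin q)} (h : ‖θ‖ ≤ ls) : satv ls εs θ = θ := by
  ext i
  exact sat_of_abs_le ((PiLp.norm_apply_le θ i).trans h)

theorem exists_bound_apply_satv {q n : ℕ} {F : Type*} [SeminormedAddCommGroup F]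
    {g : EuclideanSpace ℝ (Fin q) × EuclideanSpace ℝ (Fin n) → F} (hg : Continuous g)
    (hls : 0 ≤ ls) (εs r : ℝ) :
    ∃ C, 0 ≤ C ∧ ∀ w xr, ‖xr‖ ≤ r → ‖g (satv ls εs w, xr)‖ ≤ C := by
  obtain ⟨C, hC0, hC⟩ := ((isCompact_closedBall 0 (√q * (ls + |εs|))).prod
    (isCompact_closedBall 0 r)).exists_nonneg_bound_of_continuousOn hg.continuousOn
  exact ⟨C, hC0, fun w xr hxr => hC _ ⟨mem_closedBall_zero_iff.2 (norm_satv_le hls w),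
    mem_closedBall_zero_iff.2 hxr⟩⟩

end Saturation

section DeadZone

variable {q : ℕ} {l : ℝ} {θ θt : EuclideanSpace ℝ (Fin q)}

theorem inner_dzv (u v : EuclideanSpace ℝ (Fin q)) : ⟪u, dzv l v⟫ = ∑ i, u i * dz l (v i) := by
  simp [dzv, PiLp.inner_apply, mul_comm]

theorem norm_sub_dzv_le (hl : 0 ≤ l) (v : EuclideanSpace ℝ (Fin q)) :
    ‖v - dzv l v‖ ≤ √q * (l + 1) := by
  simpa using norm_le_sqrt_card_mul_of_abs_le (v := v - dzv l v) (by positivity)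
    fun i => abs_sub_dz_le (b := v i) hl

theorem mul_dz_add_nonneg (hl : 0 ≤ l) (hθ : ∀ i, |θ i| ≤ l) (i : Fin q) :
    0 ≤ θt i * dz l (θt i + θ i) := by
  simpa using mul_dz_nonneg (b := θt i + θ i) hl (hθ i)

theorem inner_dzv_add_nonneg (hl : 0 ≤ l) (hθ : ∀ i, |θ i| ≤ l) :
    0 ≤ ⟪θt, dzv l (θt + θ)⟫ := by
  rw [inner_dzv]
  exact Finset.sum_nonneg fun i _ => mul_dz_add_nonneg hl hθ i

theorem pow_three_le_inner_dzv_add (hq : 0 < q) (hl : 0 ≤ l) {d : ℝ} (hd0 : 0 < d) (hd1 : d ≤ 1)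
    (hθ : ∀ i, |θ i| ≤ l) (hv : √q * (l + d) ≤ ‖θt + θ‖) : d ^ 3 ≤ ⟪θt, dzv l (θt + θ)⟫ := by
  have : Nonempty (Fin q) := ⟨⟨0, hq⟩⟩
  obtain ⟨i, hi⟩ := exists_norm_le_sqrt_card_mul_abs (θt + θ)
  rw [Fintype.card_fin] at hi
  have hbig : l + d ≤ |θt i + θ i| :=
    le_of_mul_le_mul_left (hv.trans hi) (Real.sqrt_pos.2 (Nat.cast_pos.2 hq))
  have hterm : (|θt i + θ i| - l) * |dz l (θt i + θ i)| ≤ θt i * dz l (θt i + θ i) := by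
    simpa using sub_mul_abs_dz_le (b := θt i + θ i) hl (hθ i)
  rw [inner_dzv]
  calc d ^ 3 = d * d ^ 2 := by ring
    _ ≤ (|θt i + θ i| - l) * |dz l (θt i + θ i)| :=
        mul_le_mul (by linarith) (sq_le_abs_dz hl hd0 hd1 hbig) (by positivity) (by linarith)
    _ ≤ θt i * dz l (θt i + θ i) := hterm
    _ ≤ ∑ j, θt j * dz l (θt j + θ j) :=
        Finset.single_le_sum (fun j _ => mul_dz_add_nonneg hl hθ j) (Finset.mem_univ i)

theorem mul_sub_le_inner_dzv_add (hl : 0 ≤ l) (hθ : ‖θ‖ ≤ l) :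
    ‖θt‖ * (‖θt‖ - (l + √q * (l + 1))) ≤ ⟪θt, dzv l (θt + θ)⟫ := by
  have hsplit : ⟪θt, dzv l (θt + θ)⟫ =
      ‖θt‖ ^ 2 + ⟪θt, θ⟫ - ⟪θt, (θt + θ) - dzv l (θt + θ)⟫ := by
    rw [inner_sub_right, inner_add_right, real_inner_self_eq_norm_sq]; ring
  have h₁ : -⟪θt, θ⟫ ≤ ‖θt‖ * l :=
    (neg_le_abs _).trans ((abs_real_inner_le_norm _ _).trans (by gcongr))
  have h₂ : ⟪θt, (θt + θ) - dzv l (θt + θ)⟫ ≤ ‖θt‖ * (√q * (l + 1)) :=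
    (real_inner_le_norm _ _).trans (by gcongr; exact norm_sub_dzv_le hl _)
  rw [hsplit]
  nlinarith

end DeadZone

theorem exists_inner_sub_inner_le_mul_inner_dzv {q : ℕ} (hq : 0 < q) {l ls a b : ℝ} (hl : 0 ≤ l)
    (hls : √q * l < ls) (ha : 0 ≤ a) (hb : 0 ≤ b) :
    ∃ K > 0, ∀ k ≥ K, ∀ (θ θt : EuclideanSpace ℝ (Fin q)), ‖θ‖ ≤ l → ls < ‖θ + θt‖ →
      ∀ (f : EuclideanSpace ℝ (Fin q) →L[ℝ] EuclideanSpace ℝ (Fin q))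
        (p : EuclideanSpace ℝ (Fin q)), ‖f‖ ≤ a → ‖p‖ ≤ b → ⟪θt, f θt⟫ - ⟪θt, p⟫ ≤ k * ⟪θt, dzv l (θt + θ)⟫ := by
  have hsq : 0 < √q := Real.sqrt_pos.2 (Nat.cast_pos.2 hq)
  have hlls : l < ls := lt_of_sqrt_mul_lt hq hl hls
  set A := a + b / (ls - l)
  set R := l + √q * (l + 1)
  set d := min (ls / √q - l) 1
  have hA : 0 ≤ A := by have := sub_pos.2 hlls; positivity
  have hd0 : 0 < d := lt_min (by rw [sub_pos, lt_div_iff₀ hsq]; linarith) one_pos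
  have hdls : √q * (l + d) ≤ ls := by
    rw [← le_div_iff₀' hsq]; linarith [min_le_left (ls / √q - l) 1]
  refine ⟨1 + 2 * A + A * (2 * R) ^ 2 / d ^ 3, by positivity,
    fun k hk θ θt hθ hsat f p hf hp => ?_⟩
  calc _ ≤ A * ‖θt‖ ^ 2 :=
        inner_map_sub_inner_le f hf hp hb (sub_pos.2 hlls) (by linarith [norm_add_le θ θt])
    _ ≤ k * ⟪θt, dzv l (θt + θ)⟫ :=
        mul_sq_le_mul_of_lower_bounds hA (pow_pos hd0 3) (norm_nonneg θt)
          (pow_three_le_inner_dzv_add hq hl hd0 (min_le_right _ _)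
            (fun i => (PiLp.norm_apply_le θ i).trans hθ) (by rw [add_comm θt θ]; linarith))
          (mul_sub_le_inner_dzv_add hl hθ) (by linarith)

theorem statement5_general (q n : ℕ) (hq : 0 < q)
    (Θ : Set (EuclideanSpace ℝ (Fin q)))
    (lθ ls εs r1 : ℝ) (hlθpos : 0 < lθ) (hlθ : ∀ θ ∈ Θ, ‖θ‖ ≤ lθ)
    -- φ continuous
    (φ : EuclideanSpace ℝ (Fin q) → EuclideanSpace ℝ (Fin n) → EuclideanSpace ℝ (Fin n))
    (hφ : Continuous fun p : EuclideanSpace ℝ (Fin q) × EuclideanSpace ℝ (Fin n) =>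
      φ p.1 p.2)
    -- Assumption 3 (monotonicity part): l_s > √q·l_θ, ς, M1 continuous
    (hls : Real.sqrt q * lθ < ls)
    (ς : EuclideanSpace ℝ (Fin n) →
      (EuclideanSpace ℝ (Fin n) →L[ℝ] EuclideanSpace ℝ (Fin q))) (hς : Continuous ς)
    (M1 : EuclideanSpace ℝ (Fin n) →
      (EuclideanSpace ℝ (Fin q) →L[ℝ] EuclideanSpace ℝ (Fin q))) (hM1 : Continuous M1)
    (hmono : ∀ θ ∈ Θ, ∀ (θ' : EuclideanSpace ℝ (Fin q))
      (xr : EuclideanSpace ℝ (Fin n)), ‖θ'‖ ≤ ls → ‖xr‖ ≤ r1 →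
      ⟪θ' - θ, M1 xr (θ' - θ)⟫ ≤ ⟪θ' - θ, ς xr (φ θ' xr - φ θ xr)⟫ ∧
        0 ≤ ⟪θ' - θ, M1 xr (θ' - θ)⟫) :
    ∃ kdzs : ℝ, 0 < kdzs ∧ ∀ kdz ≥ kdzs, ∀ θ ∈ Θ,
      ∀ (θt : EuclideanSpace ℝ (Fin q)) (xr : EuclideanSpace ℝ (Fin n)), ‖xr‖ ≤ r1 →
        ⟪θt, -(ς xr (φ (satv ls εs (θ + θt)) xr - φ (satv ls εs θ) xr)) -
            kdz • dzv lθ (θt + θ)⟫ ≤ -⟪θt, M1 xr θt⟫ ∧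
          -⟪θt, M1 xr θt⟫ ≤ 0 := by
  have hlθls : lθ < ls := lt_of_sqrt_mul_lt hq hlθpos.le hls
  obtain ⟨cM, hcM0, hcM⟩ := (isCompact_closedBall (0 : EuclideanSpace ℝ (Fin n)) r1)
    |>.exists_nonneg_bound_of_continuousOn hM1.continuousOn
  obtain ⟨cP, hcP0, hcP⟩ := exists_bound_apply_satv (g := fun p => ς p.2 (φ p.1 p.2))
    ((hς.comp continuous_snd).clm_apply hφ) (hlθpos.le.trans hlθls.le) εs r1
  obtain ⟨K, hK0, hK⟩ :=
    exists_inner_sub_inner_le_mul_inner_dzv hq hlθpos.le hls hcM0 (by positivity : 0 ≤ 2 * cP)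
  refine ⟨K, hK0, fun kdz hkdz θ hθ θt xr hxr => ?_⟩
  have hθ' : ‖θ‖ ≤ lθ := hlθ θ hθ
  have hM : 0 ≤ ⟪θt, M1 xr θt⟫ := by
    refine inner_map_self_nonneg_of_norm_le (M1 xr) (sub_pos.2 hlθls) (fun v hv => ?_) θt
    simpa using (hmono θ hθ (θ + v) xr (by linarith [norm_add_le θ v]) hxr).2
  refine ⟨?_, neg_nonpos.2 hM⟩
  rw [inner_sub_right, inner_neg_right, real_inner_smul_right]
  suffices ⟪θt, M1 xr θt⟫ - ⟪θt, ς xr (φ (satv ls εs (θ + θt)) xr - φ (satv ls εs θ) xr)⟫ ≤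
      kdz * ⟪θt, dzv lθ (θt + θ)⟫ by linarith
  rcases le_or_gt ‖θ + θt‖ ls with hsat | hsat
  · rw [satv_of_norm_le hsat, satv_of_norm_le (hθ'.trans hlθls.le)]
    have hmono' := (hmono θ hθ (θ + θt) xr hsat hxr).1
    rw [add_sub_cancel_left] at hmono'
    have hkS : 0 ≤ kdz * ⟪θt, dzv lθ (θt + θ)⟫ := mul_nonneg (hK0.le.trans hkdz)
      (inner_dzv_add_nonneg hlθpos.le fun i => (PiLp.norm_apply_le θ i).trans hθ')
    linarith
  · refine hK kdz hkdz θ θt hθ' hsat (M1 xr) _ (hcM xr (mem_closedBall_zero_iff.2 hxr)) ?_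
    rw [map_sub]
    exact (norm_sub_le _ _).trans (by linarith [hcP (θ + θt) xr hxr, hcP θ xr hxr])

/-- key dissipation inequality for the estimation-error vector field `H`. -/
theorem statement5 (q n : ℕ) (hq : 0 < q)
    (Θ : Set (EuclideanSpace ℝ (Fin q))) (hΘ : IsCompact Θ)
    (lθ ls εs r1 : ℝ) (hlθpos : 0 < lθ) (hlθ : ∀ θ ∈ Θ, ‖θ‖ ≤ lθ) (hr1 : 0 < r1)
    (hεs : 0 < εs) (hεs1 : εs ≤ 1)
    -- φ continuous
    (φ : EuclideanSpace ℝ (Fin q) → EuclideanSpace ℝ (Fin n) → EuclideanSpace ℝ (Fin n))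
    (hφ : Continuous fun p : EuclideanSpace ℝ (Fin q) × EuclideanSpace ℝ (Fin n) =>
      φ p.1 p.2)
    -- Assumption 3 (monotonicity part): l_s > √q·l_θ, ς, M1 continuous
    (hls : Real.sqrt q * lθ < ls)
    (ς : EuclideanSpace ℝ (Fin n) →
      (EuclideanSpace ℝ (Fin n) →L[ℝ] EuclideanSpace ℝ (Fin q))) (hς : Continuous ς)
    (M1 : EuclideanSpace ℝ (Fin n) →
      (EuclideanSpace ℝ (Fin q) →L[ℝ] EuclideanSpace ℝ (Fin q))) (hM1 : Continuous M1)
    (hmono : ∀ θ ∈ Θ, ∀ (θ' : EuclideanSpace ℝ (Fin q))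
      (xr : EuclideanSpace ℝ (Fin n)), ‖θ'‖ ≤ ls → ‖xr‖ ≤ r1 →
      ⟪θ' - θ, M1 xr (θ' - θ)⟫ ≤ ⟪θ' - θ, ς xr (φ θ' xr - φ θ xr)⟫ ∧
        0 ≤ ⟪θ' - θ, M1 xr (θ' - θ)⟫) :
    ∃ kdzs : ℝ, 0 < kdzs ∧ ∀ kdz ≥ kdzs, ∀ θ ∈ Θ,
      ∀ (θt : EuclideanSpace ℝ (Fin q)) (xr : EuclideanSpace ℝ (Fin n)), ‖xr‖ ≤ r1 →
        ⟪θt, -(ς xr (φ (satv ls εs (θ + θt)) xr - φ (satv ls εs θ) xr)) -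
            kdz • dzv lθ (θt + θ)⟫ ≤ -⟪θt, M1 xr θt⟫ ∧
          -⟪θt, M1 xr θt⟫ ≤ 0 :=
  statement5_general q n hq Θ lθ ls εs r1 hlθpos hlθ φ hφ hls ς hς M1 hM1 hmono
end
end
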